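/- For triangles u, v of the regular triangular tiling with cubulation coordinates in Z^3, the dual-graph distance between u and v equals the L1 distance |u1-v1| + |u2-v2| + |u3-v3|. -/

import Mathlib

/-!
The three coordinates `lineF i` of a point of the plane sum to `-1`, so a box
`∏ [v i - 1, v i]` cuts out a nondegenerate triangle exactly when `v 0 + v 1 + v 2 ∈ {0, 1}`.
If two tiles differed in two coordinates, their common points would have those two, hence all
three, coordinates fixed; so tiles sharing an edge differ by `±1` in a single coordinate, and the
L1 distance drops by at most one along an edge. Conversely, from any tile one can step to a
neighbour that is closer in L1 distance, and these two properties force the graph distance to be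
the L1 distance.
-/

noncomputable def lineF : Fin 3 → ℝ × ℝ → ℝ := fun i p =>
  if i = 0 then p.2 - 1/3
  else if i = 1 then (Real.sqrt 3 * p.1 - p.2) / 2 - 1/3
  else -(Real.sqrt 3 * p.1 + p.2) / 2 - 1/3

def triRegion (v : Fin 3 → ℤ) : Set (ℝ × ℝ) :=
  {p | ∀ i : Fin 3, ((v i : ℝ) - 1 ≤ lineF i p ∧ lineF i p ≤ (v i : ℝ))}

def IsTile (v : Fin 3 → ℤ) : Prop := (interior (triRegion v)).Nonempty

abbrev Tile : Type := {v : Fin 3 → ℤ // IsTile v}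

def Tile.region (T : Tile) : Set (ℝ × ℝ) := triRegion T.val

def EdgeAdj (T U : Tile) : Prop := T ≠ U ∧ ¬ (T.region ∩ U.region).Subsingleton

def VertexAdj (T U : Tile) : Prop := T ≠ U ∧ (T.region ∩ U.region).Nonempty

def sumv (v : Fin 3 → ℤ) : ℤ := v 0 + v 1 + v 2

def dualGraph : SimpleGraph Tile where
  Adj := EdgeAdj
  symm := ⟨fun T U h => ⟨h.1.symm, fun hs => h.2 (by rwa [Set.inter_comm] at hs)⟩⟩
  loopless := ⟨fun T h => h.1 rfl⟩

namespace SimpleGraph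

variable {V : Type*} {G : SimpleGraph V} {d : V → V → ℕ}

lemma le_length_of_adj_le_succ (hself : ∀ v, d v v = 0)
    (hadj : ∀ u v w, G.Adj u v → d u w ≤ d v w + 1) {u w : V} (p : G.Walk u w) :
    d u w ≤ p.length := by
  induction p with
  | nil => simp [hself]
  | cons h p ih => simpa using (hadj _ _ _ h).trans (Nat.succ_le_succ ih)

lemma exists_walk_length_le_of_exists_adj_lt
    (hdesc : ∀ u w, u ≠ w → ∃ v, G.Adj u v ∧ d v w < d u w)
    (u w : V) : ∃ p : G.Walk u w, p.length ≤ d u w := by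
  induction hn : d u w using Nat.strong_induction_on generalizing u with
  | _ n ih =>
    by_cases huw : u = w
    · subst huw
      exact ⟨.nil, Nat.zero_le _⟩
    obtain ⟨v, hadj, hlt⟩ := hdesc u w huw
    obtain ⟨p, hp⟩ := ih _ (hn ▸ hlt) v rfl
    exact ⟨.cons hadj p, by rw [Walk.length_cons]; omega⟩

theorem dist_eq_of_adj_le_succ_of_exists_adj_lt (hself : ∀ v, d v v = 0)
    (hadj : ∀ u v w, G.Adj u v → d u w ≤ d v w + 1)
    (hdesc : ∀ u w, u ≠ w → ∃ v, G.Adj u v ∧ d v w < d u w) (u w : V) :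
    G.dist u w = d u w := by
  obtain ⟨p, hp⟩ := exists_walk_length_le_of_exists_adj_lt hdesc u w
  obtain ⟨q, hq⟩ := Reachable.exists_walk_length_eq_dist ⟨p⟩
  exact le_antisymm ((dist_le p).trans hp) (hq ▸ le_length_of_adj_le_succ hself hadj q)

end SimpleGraph

section L1

variable {ι : Type*} [Fintype ι]

def l1Dist (v w : ι → ℤ) : ℕ := ∑ i, (v i - w i).natAbs

@[simp] lemma l1Dist_self (v : ι → ℤ) : l1Dist v v = 0 := by
  simp [l1Dist]

lemma l1Dist_triangle (u v w : ι → ℤ) : l1Dist u w ≤ l1Dist u v + l1Dist v w := by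
  rw [l1Dist, l1Dist, l1Dist, ← Finset.sum_add_distrib]
  refine Finset.sum_le_sum fun i _ => ?_
  simpa using Int.natAbs_add_le (u i - v i) (v i - w i)

lemma l1Dist_update_lt [DecidableEq ι] {v w : ι → ℤ} {i : ι} {a : ℤ}
    (h : (a - w i).natAbs < (v i - w i).natAbs) :
    l1Dist (Function.update v i a) w < l1Dist v w := by
  refine Finset.sum_lt_sum (fun j _ => ?_) ⟨i, Finset.mem_univ _, by simpa using h⟩
  rcases eq_or_ne j i with rfl | hj
  · simpa using h.le
  · simp [hj]

end L1

lemma lineF_sum (p : ℝ × ℝ) : lineF 0 p + lineF 1 p + lineF 2 p = -1 := by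
  simp only [lineF, Fin.isValue, ↓reduceIte, one_ne_zero, Fin.reduceEq]
  ring

lemma continuous_lineF (i : Fin 3) : Continuous (lineF i) := by
  unfold lineF
  split_ifs <;> fun_prop

lemma exists_lineF_eq (a : Fin 3 → ℝ) (ha : a 0 + a 1 + a 2 = -1) :
    ∃ p, ∀ i, lineF i p = a i := by
  have hs : Real.sqrt 3 ≠ 0 := by positivity
  refine ⟨((2 * a 1 + a 0 + 1) / Real.sqrt 3, a 0 + 1 / 3), fun i => ?_⟩
  fin_cases i <;> simp [lineF] <;> field_simp <;> linarith

lemma eq_of_lineF_eq_of_ne {p q : ℝ × ℝ} {i j : Fin 3} (hij : i ≠ j)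
    (hi : lineF i p = lineF i q) (hj : lineF j p = lineF j q) : p = q := by
  have hp := lineF_sum p
  have hq := lineF_sum q
  have h01 : lineF 0 p = lineF 0 q ∧ lineF 1 p = lineF 1 q := by
    fin_cases i <;> fin_cases j <;> simp at hij hi hj ⊢ <;> constructor <;> linarith
  obtain ⟨h0, h1⟩ := h01
  simp only [lineF] at h0 h1
  norm_num at h0 h1
  have h2 : p.2 = q.2 := by linarith
  refine Prod.ext (mul_left_cancel₀ (by positivity : Real.sqrt 3 ≠ 0) ?_) h2
  linarith

lemma sumv_update (v : Fin 3 → ℤ) (i : Fin 3) (a : ℤ) :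
    sumv (Function.update v i a) = sumv v + a - v i := by
  fin_cases i <;> simp [sumv] <;> ring

lemma eq_of_le_of_sumv_le {v w : Fin 3 → ℤ} (hle : v ≤ w) (hsum : sumv w ≤ sumv v) :
    v = w := by
  have h0 : v 0 ≤ w 0 := hle 0
  have h1 : v 1 ≤ w 1 := hle 1
  have h2 : v 2 ≤ w 2 := hle 2
  unfold sumv at hsum
  funext i
  fin_cases i <;> simp <;> omega

lemma triRegion_subsingleton {v : Fin 3 → ℤ} (hv : sumv v ≤ -1 ∨ 2 ≤ sumv v) :
    (triRegion v).Subsingleton := by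
  have hv' : (v 0 : ℝ) + v 1 + v 2 ≤ -1 ∨ 2 ≤ (v 0 : ℝ) + v 1 + v 2 := by
    unfold sumv at hv
    exact_mod_cast hv
  intro p hp q hq
  obtain ⟨⟨hp0, hp0'⟩, ⟨hp1, hp1'⟩, ⟨hp2, hp2'⟩⟩ :=
    And.intro (hp 0) (And.intro (hp 1) (hp 2))
  obtain ⟨⟨hq0, hq0'⟩, ⟨hq1, hq1'⟩, ⟨hq2, hq2'⟩⟩ :=
    And.intro (hq 0) (And.intro (hq 1) (hq 2))
  have := lineF_sum p
  have := lineF_sum q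
  refine eq_of_lineF_eq_of_ne (i := 0) (j := 1) (by decide) ?_ ?_ <;>
    rcases hv' with h | h <;> linarith

lemma isTile_iff {v : Fin 3 → ℤ} : IsTile v ↔ sumv v = 0 ∨ sumv v = 1 := by
  constructor
  · rintro ⟨p, hp⟩
    by_contra h
    obtain he | ⟨x, hx⟩ := (triRegion_subsingleton (v := v) (by omega)).eq_empty_or_singleton
    · rw [he, interior_empty] at hp
      exact hp
    · rw [hx, interior_singleton] at hp
      exact hp
  · intro h
    -- the centroid of the tile
    set c : ℝ := ((sumv v : ℝ) + 1) / 3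
    have hc01 : 0 < c ∧ c < 1 := by rcases h with h | h <;> norm_num [c, h]
    obtain ⟨p, hp⟩ := exists_lineF_eq (fun i => v i - c) (by simp [c, sumv]; ring)
    have hopen : IsOpen (⋂ i, lineF i ⁻¹' Set.Ioo ((v i : ℝ) - 1) (v i)) :=
      isOpen_iInter_of_finite fun i => isOpen_Ioo.preimage (continuous_lineF i)
    refine ⟨p, mem_interior.mpr ⟨_, fun q hq i => ?_, hopen, ?_⟩⟩
    · obtain ⟨h1, h2⟩ := Set.mem_iInter.mp hq i
      exact ⟨h1.le, h2.le⟩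
    · simp only [Set.mem_iInter, Set.mem_preimage, Set.mem_Ioo, hp]
      intro i
      constructor <;> linarith

lemma abs_sub_le_one_of_mem_inter {v w : Fin 3 → ℤ} {p : ℝ × ℝ}
    (hp : p ∈ triRegion v ∩ triRegion w) (i : Fin 3) : |v i - w i| ≤ 1 := by
  have h1 : (v i : ℝ) ≤ w i + 1 := by linarith [hp.1 i, hp.2 i]
  have h2 : (w i : ℝ) ≤ v i + 1 := by linarith [hp.1 i, hp.2 i]
  norm_cast at h1 h2
  exact abs_le.mpr ⟨by omega, by omega⟩

/-- Tiles whose `i`-th coordinates differ can only meet on the line where `lineF i` is the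
smaller of the two. -/
lemma lineF_eq_of_mem_inter {v w : Fin 3 → ℤ} {p q : ℝ × ℝ} {i : Fin 3}
    (hp : p ∈ triRegion v ∩ triRegion w) (hq : q ∈ triRegion v ∩ triRegion w)
    (h : v i ≠ w i) :
    lineF i p = lineF i q := by
  wlog hlt : v i < w i generalizing v w
  · rw [Set.inter_comm] at hp hq
    exact this hp hq h.symm (by omega)
  have hle : (v i : ℝ) + 1 ≤ w i := by exact_mod_cast hlt
  linarith [(hp.1 i).2, (hp.2 i).1, (hq.1 i).2, (hq.2 i).1]

lemma l1Dist_eq_one_of_adj {T U : Tile} (h : dualGraph.Adj T U) : l1Dist T.val U.val = 1 := by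
  obtain ⟨hne, hns⟩ := h
  obtain ⟨p, hp, q, hq, hpq⟩ := Set.not_subsingleton_iff.mp hns
  obtain ⟨i, hi⟩ := Function.ne_iff.mp (Subtype.val_injective.ne hne)
  have hsame : ∀ j ≠ i, T.val j = U.val j := fun j hji => by_contra fun hj =>
    hpq (eq_of_lineF_eq_of_ne hji (lineF_eq_of_mem_inter hp hq hj) (lineF_eq_of_mem_inter hp hq hi))
  rw [l1Dist, Finset.sum_eq_single i (fun j _ hj => by simp [hsame j hj]) (by simp)]
  have h1 := abs_sub_le_one_of_mem_inter hp i
  have h0 : T.val i - U.val i ≠ 0 := sub_ne_zero.mpr hi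
  rw [abs_le] at h1
  omega

lemma dualGraph_adj_of_update {T U : Tile} {i : Fin 3}
    (h : U.val = Function.update T.val i (T.val i + 1)) : dualGraph.Adj T U := by
  have hsum : sumv T.val = 0 := by
    have := isTile_iff.mp U.2
    rw [h, sumv_update] at this
    have := isTile_iff.mp T.2
    omega
  have hsumR : (T.val 0 : ℝ) + T.val 1 + T.val 2 = 0 := by
    unfold sumv at hsum
    exact_mod_cast hsum
  -- the endpoints of the common edge are `T - e j` for the two indices `j ≠ i`
  have hend : ∀ j ≠ i, ∃ p ∈ T.region ∩ U.region,
      ∀ k, lineF k p = T.val k - if k = j then 1 else 0 := by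
    intro j hji
    obtain ⟨p, hp⟩ := exists_lineF_eq (fun k => T.val k - if k = j then 1 else 0)
      (by fin_cases j <;> simp <;> linarith)
    refine ⟨p, ⟨fun k => ?_, fun k => ?_⟩, hp⟩ <;> rw [hp k]
    · split_ifs <;> norm_num
    · rw [h]
      rcases eq_or_ne k i with rfl | hki
      · simp [hji.symm]
      · simp only [Function.update_of_ne hki]
        split_ifs <;> norm_num
  obtain ⟨j, k, hji, hki, hjk⟩ : ∃ j k : Fin 3, j ≠ i ∧ k ≠ i ∧ j ≠ k := by
    fin_cases i <;> decide
  obtain ⟨p, hp, hpj⟩ := hend j hji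
  obtain ⟨q, hq, hqj⟩ := hend k hki
  refine ⟨fun hTU => by simpa [hTU] using congrFun h i,
    Set.not_subsingleton_iff.mpr ⟨p, hp, q, hq, fun hpq => ?_⟩⟩
  have := hpj j
  rw [hpq, hqj j] at this
  simp only [hjk, ↓reduceIte, sub_zero] at this
  linarith

/-- Stepping from `T` towards `U`: from a tile of sum `0` raise a coordinate that is below `U`'s,
from a tile of sum `1` lower one that is above it. -/
lemma exists_adj_l1Dist_lt {T U : Tile} (hTU : T ≠ U) :
    ∃ W, dualGraph.Adj T W ∧ l1Dist W.val U.val < l1Dist T.val U.val := by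
  have hne : T.val ≠ U.val := Subtype.val_injective.ne hTU
  have hU := isTile_iff.mp U.2
  rcases isTile_iff.mp T.2 with hT | hT
  · obtain ⟨i, hi⟩ : ∃ i, T.val i < U.val i := by
      by_contra! h
      exact hne (eq_of_le_of_sumv_le h (by omega)).symm
    let W : Tile := ⟨Function.update T.val i (T.val i + 1), isTile_iff.mpr (by
      rw [sumv_update]; omega)⟩
    exact ⟨W, dualGraph_adj_of_update rfl, l1Dist_update_lt (by omega)⟩
  · obtain ⟨i, hi⟩ : ∃ i, U.val i < T.val i := by
      by_contra! h
      exact hne (eq_of_le_of_sumv_le h (by omega))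
    let W : Tile := ⟨Function.update T.val i (T.val i - 1), isTile_iff.mpr (by
      rw [sumv_update]; omega)⟩
    exact ⟨W, (dualGraph_adj_of_update (i := i) (by simp [W])).symm,
      l1Dist_update_lt (by omega)⟩

theorem dual_graph_dist_eq_l1 (T U : Tile) :
    (dualGraph.dist T U : ℤ) =
      |T.val 0 - U.val 0| + |T.val 1 - U.val 1| + |T.val 2 - U.val 2| := by
  have hlip (T W U : Tile) (h : dualGraph.Adj T W) :
      l1Dist T.val U.val ≤ l1Dist W.val U.val + 1 := by
    have := l1Dist_triangle T.val W.val U.val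
    rw [l1Dist_eq_one_of_adj h] at this
    omega
  rw [SimpleGraph.dist_eq_of_adj_le_succ_of_exists_adj_lt (d := fun T U => l1Dist T.val U.val)
    (fun _ => l1Dist_self _) hlip (fun _ _ => exists_adj_l1Dist_lt)]
  simp [l1Dist, Fin.sum_univ_three]
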